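/- arXiv:nlin/0701058 — 5 statements merged into one kernel-verified Lean document; each statement's English description precedes it below -/
import Mathlib

section
/- If f ∈ K(x,y) is a rational first integral of the one-dimensional Lie algebra generated by H = xy (i.e. {xy, f} = 0), then f ∈ K(xy), i.e. f is a rational function of the single element h = xy with coefficients in K. -/
open MvPolynomial Finsupp

/-- Canonical Poisson bracket on `K[x,y]`, with `x = X 0`, `y = X 1`. -/
noncomputable def pbK (K : Type*) [CommRing K] (F G : MvPolynomial (Fin 2) K) :
    MvPolynomial (Fin 2) K :=
  pderiv 0 F * pderiv 1 G - pderiv 1 F * pderiv 0 G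

noncomputable section

variable {K : Type*} [Field K]

/-- weights: x has weight -1, y has weight 1 -/
def wt : Fin 2 → ℤ := ![(-1 : ℤ), 1]

lemma weight_wt (d : Fin 2 →₀ ℕ) : Finsupp.weight wt d = (d 1 : ℤ) - (d 0 : ℤ) := by
  rw [Finsupp.weight_apply, Finsupp.sum_fintype]
  · simp [wt, Fin.sum_univ_two]; ring
  · intro i; simp

/-- the derivation D = y ∂_y - x ∂_x -/
noncomputable def DD (F : MvPolynomial (Fin 2) K) : MvPolynomial (Fin 2) K :=
  X 1 * pderiv 1 F - X 0 * pderiv 0 F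

lemma pbK_eq (F : MvPolynomial (Fin 2) K) : pbK K (X 0 * X 1) F = DD F := by
  simp [pbK, DD, pderiv_X, Pi.single_apply]

lemma DD_monomial (d : Fin 2 →₀ ℕ) (c : K) :
    DD (monomial d c) = ((d 1 : ℤ) - (d 0 : ℤ)) • monomial d c := by
  have key : ∀ i : Fin 2, X i * pderiv i (monomial d c) = (d i) • monomial d c := by
    intro i
    rw [pderiv_monomial]
    rcases Nat.eq_zero_or_pos (d i) with h0 | hpos
    · simp [h0]
    · rw [X, monomial_mul]
      have : Finsupp.single i 1 + (d - Finsupp.single i 1) = d := by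
        ext j
        by_cases hj : j = i
        · subst hj; simp; omega
        · simp [Finsupp.single_apply, hj, Ne.symm hj]
      rw [this]
      rw [smul_monomial]
      congr 1
      simp [nsmul_eq_mul]
      ring
  rw [DD, key 0, key 1, sub_smul]
  congr 1 <;> rw [natCast_zsmul]

lemma DD_sum {α : Type*} (s : Finset α) (f : α → MvPolynomial (Fin 2) K) :
    DD (∑ i ∈ s, f i) = ∑ i ∈ s, DD (f i) := by
  simp [DD, Finset.mul_sum, ← Finset.sum_sub_distrib]

lemma DD_isWH {A : MvPolynomial (Fin 2) K} {n : ℤ}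
    (hA : A.IsWeightedHomogeneous wt n) : DD A = n • A := by
  conv_lhs => rw [A.as_sum]
  rw [DD_sum]
  conv_rhs => rw [A.as_sum]
  rw [Finset.smul_sum]
  apply Finset.sum_congr rfl
  intro d hd
  rw [DD_monomial]
  have : Finsupp.weight wt d = n := hA (MvPolynomial.mem_support_iff.mp hd)
  rw [weight_wt] at this
  rw [this]

/-- weighted homogeneous component -/
def cp (n : ℤ) (F : MvPolynomial (Fin 2) K) : MvPolynomial (Fin 2) K :=
  weightedHomogeneousComponent wt n F

lemma cp_isWH (n : ℤ) (F : MvPolynomial (Fin 2) K) : (cp n F).IsWeightedHomogeneous wt n :=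
  weightedHomogeneousComponent_isWeightedHomogeneous n F

lemma cp_sum {α : Type*} (n : ℤ) (s : Finset α) (f : α → MvPolynomial (Fin 2) K) :
    cp n (∑ i ∈ s, f i) = ∑ i ∈ s, cp n (f i) := map_sum _ _ _

lemma cp_smul_mul (c : ℤ) (a m k : ℤ) (F G : MvPolynomial (Fin 2) K) :
    cp k (c • (cp a F * cp m G)) =
      if k = a + m then c • (cp a F * cp m G) else 0 := by
  unfold cp
  rw [map_zsmul, weightedHomogeneousComponent_of_mem
    ((mem_weightedHomogeneousSubmodule _ _ _ _).mpr
      ((weightedHomogeneousComponent_isWeightedHomogeneous a F).mul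
        (weightedHomogeneousComponent_isWeightedHomogeneous m G))), smul_ite, smul_zero]

lemma cp_eq_zero_of_not_mem {F : MvPolynomial (Fin 2) K} {n : ℤ}
    (h : n ∉ F.support.image (Finsupp.weight wt)) : cp n F = 0 := by
  apply weightedHomogeneousComponent_eq_zero'
  intro d hd hw
  exact h (Finset.mem_image.mpr ⟨d, hd, hw⟩)

lemma cp_ne_zero_of_mem {F : MvPolynomial (Fin 2) K} {n : ℤ}
    (h : n ∈ F.support.image (Finsupp.weight wt)) : cp n F ≠ 0 := by
  classical
  obtain ⟨d, hd, hw⟩ := Finset.mem_image.mp h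
  intro h0
  have : coeff d (cp n F) = coeff d F := by
    unfold cp
    rw [coeff_weightedHomogeneousComponent, if_pos hw]
  rw [h0, coeff_zero] at this
  exact (MvPolynomial.mem_support_iff.mp hd) this.symm

lemma sum_cp (F : MvPolynomial (Fin 2) K) (S : Finset ℤ) (hS : ∀ n ∉ S, cp n F = 0) :
    ∑ n ∈ S, cp n F = F := by
  have h2 := sum_weightedHomogeneousComponent wt F
  rwa [finsum_eq_finset_sum_of_support_subset _ (s := S)
    (fun n hn => by by_contra h'; exact hn (hS n (by simpa using h')) |>.elim)] at h2

lemma key_sum (P Q : MvPolynomial (Fin 2) K) (S : Finset ℤ)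
    (hSP : ∀ n ∉ S, cp n P = 0) (hSQ : ∀ n ∉ S, cp n Q = 0)
    (h : Q * DD P = P * DD Q) :
    ∑ x ∈ S ×ˢ S, (x.1 - x.2) • (cp x.1 P * cp x.2 Q) = 0 := by
  have hDP : DD P = ∑ a ∈ S, a • cp a P := by
    conv_lhs => rw [← sum_cp P S hSP]
    rw [DD_sum]
    exact Finset.sum_congr rfl fun a _ => DD_isWH (cp_isWH a P)
  have hDQ : DD Q = ∑ m ∈ S, m • cp m Q := by
    conv_lhs => rw [← sum_cp Q S hSQ]
    rw [DD_sum]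
    exact Finset.sum_congr rfl fun a _ => DD_isWH (cp_isWH a Q)
  have e1 : Q * DD P = ∑ a ∈ S, ∑ m ∈ S, a • (cp a P * cp m Q) := by
    conv_lhs => rw [← sum_cp Q S hSQ, hDP]
    rw [Finset.sum_mul_sum, Finset.sum_comm]
    refine Finset.sum_congr rfl fun a _ => Finset.sum_congr rfl fun m _ => ?_
    rw [mul_comm, smul_mul_assoc]
  have e2 : P * DD Q = ∑ a ∈ S, ∑ m ∈ S, m • (cp a P * cp m Q) := by
    conv_lhs => rw [← sum_cp P S hSP, hDQ]
    rw [Finset.sum_mul_sum]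
    refine Finset.sum_congr rfl fun a _ => Finset.sum_congr rfl fun m _ => ?_
    rw [mul_smul_comm]
  rw [Finset.sum_product]
  have : ∀ a ∈ S, ∀ m ∈ S, (a - m) • (cp a P * cp m Q)
      = a • (cp a P * cp m Q) - m • (cp a P * cp m Q) := fun _ _ _ _ => sub_smul _ _ _
  calc ∑ a ∈ S, ∑ m ∈ S, (a - m) • (cp a P * cp m Q)
      = ∑ a ∈ S, ∑ m ∈ S, (a • (cp a P * cp m Q) - m • (cp a P * cp m Q)) := by
        exact Finset.sum_congr rfl fun a ha => Finset.sum_congr rfl fun m hm => this a ha m hm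
    _ = (∑ a ∈ S, ∑ m ∈ S, a • (cp a P * cp m Q))
        - ∑ a ∈ S, ∑ m ∈ S, m • (cp a P * cp m Q) := by
        rw [← Finset.sum_sub_distrib]
        exact Finset.sum_congr rfl fun a ha => Finset.sum_sub_distrib _ _
    _ = Q * DD P - P * DD Q := by rw [e1, e2]
    _ = 0 := by rw [h, sub_self]

lemma cp_zero (k : ℤ) : cp (K := K) k 0 = 0 := map_zero _

lemma sym_sum (Q : MvPolynomial (Fin 2) K) (S : Finset ℤ) :
    ∑ x ∈ S ×ˢ S, (x.1 - x.2) • (cp x.1 Q * cp x.2 Q) = 0 := by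
  rw [Finset.sum_product]
  have e : ∀ f : ℤ → ℤ → MvPolynomial (Fin 2) K,
      (∑ a ∈ S, ∑ m ∈ S, (a - m) • (f a m))
        = (∑ a ∈ S, ∑ m ∈ S, a • f a m) - ∑ a ∈ S, ∑ m ∈ S, m • f a m := by
    intro f
    rw [← Finset.sum_sub_distrib]
    refine Finset.sum_congr rfl fun a _ => ?_
    rw [← Finset.sum_sub_distrib]
    exact Finset.sum_congr rfl fun m _ => sub_smul _ _ _
  rw [e]
  have : (∑ a ∈ S, ∑ m ∈ S, m • (cp a Q * cp m Q))
      = ∑ a ∈ S, ∑ m ∈ S, a • (cp a Q * cp m Q) := by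
    rw [Finset.sum_comm]
    exact Finset.sum_congr rfl fun a _ => Finset.sum_congr rfl fun m _ => by rw [mul_comm]
  rw [this, sub_self]

lemma key_comp (P Q : MvPolynomial (Fin 2) K) (S : Finset ℤ)
    (hSP : ∀ n ∉ S, cp n P = 0) (hSQ : ∀ n ∉ S, cp n Q = 0)
    (h : Q * DD P = P * DD Q) (k : ℤ) :
    ∑ x ∈ S ×ˢ S, (if k = x.1 + x.2 then (x.1 - x.2) • (cp x.1 P * cp x.2 Q) else 0) = 0 := by
  have := congrArg (cp k) (key_sum P Q S hSP hSQ h)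
  rw [cp_sum] at this
  simp only [cp_smul_mul] at this
  rw [cp_zero] at this
  simpa using this

lemma sym_comp (Q : MvPolynomial (Fin 2) K) (S : Finset ℤ) (k : ℤ) :
    ∑ x ∈ S ×ˢ S, (if k = x.1 + x.2 then (x.1 - x.2) • (cp x.1 Q * cp x.2 Q) else 0) = 0 := by
  have := congrArg (cp k) (sym_sum Q S)
  rw [cp_sum] at this
  simp only [cp_smul_mul] at this
  rw [cp_zero] at this
  simpa using this

lemma zsmul_cancel [CharZero K] {c : ℤ} {F : MvPolynomial (Fin 2) K}
    (h : c • F = 0) (hF : F ≠ 0) : c = 0 := by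
  rw [zsmul_eq_mul] at h
  rcases mul_eq_zero.mp h with h1 | h1
  · have : (MvPolynomial.C (c : K) : MvPolynomial (Fin 2) K) = 0 := by
      rwa [map_intCast (MvPolynomial.C : K →+* MvPolynomial (Fin 2) K) c]
    have := (MvPolynomial.C_eq_zero).mp this
    exact_mod_cast this
  · exact absurd h1 hF

lemma finsupp_fin2_eq (d : Fin 2 →₀ ℕ) :
    (monomial d (1:K)) = X 0 ^ d 0 * X 1 ^ d 1 := by
  rw [monomial_eq, C_1, one_mul, Finsupp.prod_fintype]
  · rw [Fin.prod_univ_two]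
  · intro i; rw [pow_zero]

lemma monomial_eq' (d : Fin 2 →₀ ℕ) (c : K) :
    monomial d c = C c * (X 0 ^ d 0 * X 1 ^ d 1) := by
  rw [← finsupp_fin2_eq, C_mul_monomial, mul_one]

lemma hom_factor_nonneg {A : MvPolynomial (Fin 2) K} {n : ℤ}
    (hA : A.IsWeightedHomogeneous wt n) (hn : 0 ≤ n) :
    ∃ B : Polynomial K,
      A = Polynomial.aeval (X 0 * X 1 : MvPolynomial (Fin 2) K) B * X 1 ^ n.toNat := by
  refine ⟨∑ d ∈ A.support, Polynomial.monomial (d 0) (coeff d A), ?_⟩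
  conv_lhs => rw [A.as_sum]
  rw [map_sum, Finset.sum_mul]
  refine Finset.sum_congr rfl fun d hd => ?_
  have hw : (d 1 : ℤ) - (d 0 : ℤ) = n := by
    have := hA (MvPolynomial.mem_support_iff.mp hd)
    rwa [weight_wt] at this
  have hd1 : d 1 = d 0 + n.toNat := by omega
  rw [Polynomial.aeval_monomial, monomial_eq', hd1, algebraMap_eq]
  ring

lemma hom_factor_neg {A : MvPolynomial (Fin 2) K} {n : ℤ}
    (hA : A.IsWeightedHomogeneous wt n) (hn : n < 0) :
    ∃ B : Polynomial K,
      A = Polynomial.aeval (X 0 * X 1 : MvPolynomial (Fin 2) K) B * X 0 ^ (-n).toNat := by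
  refine ⟨∑ d ∈ A.support, Polynomial.monomial (d 1) (coeff d A), ?_⟩
  conv_lhs => rw [A.as_sum]
  rw [map_sum, Finset.sum_mul]
  refine Finset.sum_congr rfl fun d hd => ?_
  have hw : (d 1 : ℤ) - (d 0 : ℤ) = n := by
    have := hA (MvPolynomial.mem_support_iff.mp hd)
    rwa [weight_wt] at this
  have hd0 : d 0 = d 1 + (-n).toNat := by omega
  rw [Polynomial.aeval_monomial, monomial_eq', hd0, algebraMap_eq]
  ring

end

/-- If `f = P/Q ∈ K(x,y)` is a rational first integral of the one-dimensional
Lie algebra generated by `H = xy` (i.e. `{xy, f} = 0`, expressed by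
cross-multiplication), then `f ∈ K(xy)`: `f = A(xy)/B(xy)` for univariate
polynomials `A, B` over `K`. -/
theorem stmt_5 {K : Type*} [Field K] [Algebra ℂ K]
    (P Q : MvPolynomial (Fin 2) K) (hQ : Q ≠ 0)
    (h : Q * pbK K (X 0 * X 1) P = P * pbK K (X 0 * X 1) Q) :
    ∃ A B : Polynomial K,
      Polynomial.aeval (X 0 * X 1 : MvPolynomial (Fin 2) K) B ≠ 0 ∧
      P * Polynomial.aeval (X 0 * X 1 : MvPolynomial (Fin 2) K) B
        = Polynomial.aeval (X 0 * X 1 : MvPolynomial (Fin 2) K) A * Q := by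
  classical
  haveI : CharZero K := charZero_of_injective_algebraMap (algebraMap ℂ K).injective
  rw [pbK_eq, pbK_eq] at h
  by_cases hP : P = 0
  · exact ⟨0, 1, by simp, by simp [hP]⟩
  set MP := P.support.image (Finsupp.weight wt) with hMPdef
  set MQ := Q.support.image (Finsupp.weight wt) with hMQdef
  set S := MP ∪ MQ with hSdef
  have hSP : ∀ n ∉ S, cp n P = 0 :=
    fun n hn => cp_eq_zero_of_not_mem (fun hc => hn (Finset.mem_union_left _ hc))
  have hSQ : ∀ n ∉ S, cp n Q = 0 :=
    fun n hn => cp_eq_zero_of_not_mem (fun hc => hn (Finset.mem_union_right _ hc))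
  have hMPne : MP.Nonempty := Finset.image_nonempty.mpr (support_nonempty.mpr hP)
  have hMQne : MQ.Nonempty := Finset.image_nonempty.mpr (support_nonempty.mpr hQ)
  set p := MP.max' hMPne with hpdef
  set q := MQ.max' hMQne with hqdef
  have hPp : cp p P ≠ 0 := cp_ne_zero_of_mem (MP.max'_mem hMPne)
  have hQq : cp q Q ≠ 0 := cp_ne_zero_of_mem (MQ.max'_mem hMQne)
  have hPhigh : ∀ n, p < n → cp n P = 0 :=
    fun n hn => cp_eq_zero_of_not_mem (fun hc => absurd (MP.le_max' n hc) (not_le.mpr hn))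
  have hQhigh : ∀ n, q < n → cp n Q = 0 :=
    fun n hn => cp_eq_zero_of_not_mem (fun hc => absurd (MQ.le_max' n hc) (not_le.mpr hn))
  have hpq : p = q := by
    have hE := key_comp P Q S hSP hSQ h (p + q)
    rw [Finset.sum_eq_single_of_mem ((p, q) : ℤ × ℤ)
      (Finset.mem_product.mpr ⟨Finset.mem_union_left _ (MP.max'_mem hMPne),
        Finset.mem_union_right _ (MQ.max'_mem hMQne)⟩)] at hE
    · rw [if_pos rfl] at hE
      have := zsmul_cancel hE (mul_ne_zero hPp hQq)
      omega
    · intro x hx hne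
      by_cases hk : p + q = x.1 + x.2
      · rw [if_pos hk]
        rcases lt_or_ge p x.1 with h1 | h1
        · rw [hPhigh _ h1, zero_mul, smul_zero]
        rcases lt_or_ge q x.2 with h2 | h2
        · rw [hQhigh _ h2, mul_zero, smul_zero]
        · exact absurd (Prod.ext (by omega) (by omega)) hne
      · rw [if_neg hk]
  have hPw : cp p P ≠ 0 := hPp
  have hQw : cp p Q ≠ 0 := by rw [hpq]; exact hQq
  have hSle : ∀ n ∈ S, n ≤ p := by
    intro n hn
    rcases Finset.mem_union.mp hn with hc | hc
    · exact MP.le_max' n hc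
    · rw [hpq]; exact MQ.le_max' n hc
  have T : ∀ k : ℕ, cp (p - k) P * cp p Q = cp (p - k) Q * cp p P := by
    intro k
    induction k using Nat.strong_induction_on with
    | _ k IH =>
    rcases Nat.eq_zero_or_pos k with rfl | hk
    · simp only [Nat.cast_zero, sub_zero]; ring
    set n := p - (k : ℤ) with hndef
    by_cases hnz : cp n P = 0 ∧ cp n Q = 0
    · rw [hnz.1, hnz.2, zero_mul, zero_mul]
    have hnS : n ∈ S := by
      by_contra hns
      exact hnz ⟨hSP n hns, hSQ n hns⟩
    have hwS : p ∈ S := Finset.mem_union_left _ (MP.max'_mem hMPne)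
    have hnw : n ≠ p := by omega
    have hne : ((p, n) : ℤ × ℤ) ≠ (n, p) := by
      intro hcon
      exact hnw ((Prod.mk.injEq _ _ _ _).mp hcon).2
    set f : ℤ × ℤ → MvPolynomial (Fin 2) K := fun x =>
      (if n + p = x.1 + x.2 then (x.1 - x.2) • (cp x.1 P * cp x.2 Q) else 0) * (cp p P * cp p Q)
      - (if n + p = x.1 + x.2 then (x.1 - x.2) • (cp x.1 Q * cp x.2 Q) else 0) * (cp p P * cp p P)
      with hfdef
    have hfs : ∑ x ∈ S ×ˢ S, f x = 0 := by
      rw [hfdef, Finset.sum_sub_distrib, ← Finset.sum_mul, ← Finset.sum_mul,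
        key_comp P Q S hSP hSQ h (n + p), sym_comp Q S (n + p), zero_mul, zero_mul, sub_zero]
    have hfzero : ∀ x ∈ S ×ˢ S, x ∉ ({(p, n), (n, p)} : Finset (ℤ × ℤ)) → f x = 0 := by
      intro x hx hxm
      rw [hfdef]
      simp only
      by_cases hk2 : n + p = x.1 + x.2
      · rw [if_pos hk2, if_pos hk2]
        obtain ⟨hx1, hx2⟩ := Finset.mem_product.mp hx
        have hx1le := hSle _ hx1
        have hx2le := hSle _ hx2
        have hxne2 : x ≠ (n, p) := fun hcon => hxm (by rw [hcon]; simp)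
        have hx1n : n < x.1 := by
          rcases eq_or_lt_of_le (show n ≤ x.1 by omega) with heq | hlt
          · exact absurd (Prod.ext heq.symm (by omega)) hxne2
          · exact hlt
        have hk1lt : (p - x.1).toNat < k := by omega
        have hT1 := IH _ hk1lt
        rw [show (p - ((p - x.1).toNat : ℤ)) = x.1 by omega] at hT1
        rw [smul_mul_assoc, smul_mul_assoc, ← smul_sub]
        rw [show cp x.1 P * cp x.2 Q * (cp p P * cp p Q)
            - cp x.1 Q * cp x.2 Q * (cp p P * cp p P) = 0 from
          sub_eq_zero.mpr (by linear_combination (cp x.2 Q * cp p P) * hT1), smul_zero]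
      · rw [if_neg hk2, if_neg hk2, zero_mul, zero_mul, sub_self]
    have hsub : ({(p, n), (n, p)} : Finset (ℤ × ℤ)) ⊆ S ×ˢ S := by
      intro x hx
      rcases Finset.mem_insert.mp hx with rfl | hx
      · exact Finset.mem_product.mpr ⟨hwS, hnS⟩
      · rw [Finset.mem_singleton.mp hx]
        exact Finset.mem_product.mpr ⟨hnS, hwS⟩
    have h2 : f (p, n) + f (n, p) = 0 := by
      have hss := Finset.sum_subset hsub (fun x hx hxn => hfzero x hx hxn)
      rw [hfs] at hss
      rw [← Finset.sum_pair hne]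
      exact hss
    rw [hfdef] at h2
    simp only [if_pos (show n + p = p + n by ring), if_pos rfl] at h2
    simp only [zsmul_eq_mul] at h2
    have h3 : ((p - n : ℤ) : MvPolynomial (Fin 2) K)
        * ((cp n Q * cp p P - cp n P * cp p Q) * (cp p P * cp p Q)) = 0 := by
      push_cast at h2 ⊢
      linear_combination h2
    have hcast : ((p - n : ℤ) : MvPolynomial (Fin 2) K) ≠ 0 := by
      rw [show ((p - n : ℤ) : MvPolynomial (Fin 2) K) = MvPolynomial.C ((p - n : ℤ) : K) from
        (map_intCast (MvPolynomial.C : K →+* MvPolynomial (Fin 2) K) _).symm]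
      rw [Ne, MvPolynomial.C_eq_zero, Int.cast_eq_zero]
      omega
    have h4 := (mul_eq_zero.mp h3).resolve_left hcast
    have h5 := (mul_eq_zero.mp h4).resolve_right (mul_ne_zero hPw hQw)
    exact (sub_eq_zero.mp h5).symm
  have hfin : P * cp p Q = Q * cp p P := by
    conv_lhs => rw [← sum_cp P S hSP]
    conv_rhs => rw [← sum_cp Q S hSQ]
    rw [Finset.sum_mul, Finset.sum_mul]
    refine Finset.sum_congr rfl fun n hn => ?_
    have hle := hSle n hn
    have hT := T (p - n).toNat
    rwa [show (p - ((p - n).toNat : ℤ)) = n by omega] at hT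
  rcases le_or_gt 0 p with hw | hw
  · obtain ⟨BQ, hBQ⟩ := hom_factor_nonneg (cp_isWH p Q) hw
    obtain ⟨BP, hBP⟩ := hom_factor_nonneg (cp_isWH p P) hw
    refine ⟨BP, BQ, fun h0 => hQw (by rw [hBQ, h0, zero_mul]), ?_⟩
    have hX : (X 1 : MvPolynomial (Fin 2) K) ^ p.toNat ≠ 0 := pow_ne_zero _ (X_ne_zero _)
    apply mul_right_cancel₀ hX
    calc P * Polynomial.aeval (X 0 * X 1 : MvPolynomial (Fin 2) K) BQ * X 1 ^ p.toNat
        = P * (Polynomial.aeval (X 0 * X 1 : MvPolynomial (Fin 2) K) BQ * X 1 ^ p.toNat) := by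
          ring
      _ = Q * (Polynomial.aeval (X 0 * X 1 : MvPolynomial (Fin 2) K) BP * X 1 ^ p.toNat) := by
          rw [← hBQ, ← hBP]; exact hfin
      _ = Polynomial.aeval (X 0 * X 1 : MvPolynomial (Fin 2) K) BP * Q * X 1 ^ p.toNat := by
          ring
  · obtain ⟨BQ, hBQ⟩ := hom_factor_neg (cp_isWH p Q) hw
    obtain ⟨BP, hBP⟩ := hom_factor_neg (cp_isWH p P) hw
    refine ⟨BP, BQ, fun h0 => hQw (by rw [hBQ, h0, zero_mul]), ?_⟩
    have hX : (X 0 : MvPolynomial (Fin 2) K) ^ (-p).toNat ≠ 0 := pow_ne_zero _ (X_ne_zero _)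
    apply mul_right_cancel₀ hX
    calc P * Polynomial.aeval (X 0 * X 1 : MvPolynomial (Fin 2) K) BQ * X 0 ^ (-p).toNat
        = P * (Polynomial.aeval (X 0 * X 1 : MvPolynomial (Fin 2) K) BQ * X 0 ^ (-p).toNat) := by
          ring
      _ = Q * (Polynomial.aeval (X 0 * X 1 : MvPolynomial (Fin 2) K) BP * X 0 ^ (-p).toNat) := by
          rw [← hBQ, ← hBP]; exact hfin
      _ = Polynomial.aeval (X 0 * X 1 : MvPolynomial (Fin 2) K) BP * Q * X 0 ^ (-p).toNat := by
          ring
end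

section
/- Let F = (F₁, F₂) with F₁, F₂ ∈ ℂ[q₁,q₂] homogeneous of degree k−1, and suppose that for every A ∈ GL(2,ℂ) the transformed force F_A = (F₁^A, F₂^A), where F_A(q) = A⁻¹F(Aq), satisfies deg_{q₂} F₁^A < k−1. Then q₁F₂ − q₂F₁ = 0 identically. -/
open MvPolynomial

/-- Substitution of the linear change of variables `q ↦ M q` into a polynomial. -/
noncomputable def lsub (M : Matrix (Fin 2) (Fin 2) ℂ) (P : MvPolynomial (Fin 2) ℂ) :
    MvPolynomial (Fin 2) ℂ :=
  aeval (fun i : Fin 2 => ∑ j : Fin 2, MvPolynomial.C (M i j) * X j) P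

lemma lsub_isHomogeneous (M : Matrix (Fin 2) (Fin 2) ℂ) {P : MvPolynomial (Fin 2) ℂ} {n : ℕ}
    (h : P.IsHomogeneous n) : (lsub M P).IsHomogeneous n := by
  have := h.aeval (fun i : Fin 2 => ∑ j : Fin 2, MvPolynomial.C (M i j) * X j)
    (n := 1) (fun i => ?_)
  · simpa [lsub] using this
  · exact IsHomogeneous.sum _ _ _ (fun j _ => isHomogeneous_C_mul_X _ _)

lemma eval_lsub (M : Matrix (Fin 2) (Fin 2) ℂ) (P : MvPolynomial (Fin 2) ℂ) (x : Fin 2 → ℂ) :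
    eval x (lsub M P) = eval (fun i => ∑ j : Fin 2, M i j * x j) P := by
  unfold lsub
  induction P using MvPolynomial.induction_on with
  | C a => simp
  | add p q hp hq => rw [map_add, map_add, hp, hq, map_add]
  | mul_X p i hp =>
      rw [map_mul, map_mul, hp, aeval_X, map_mul, eval_X]
      congr 1
      simp

lemma coeff_eq_eval {d : ℕ} (hd : d ≠ 0) {P : MvPolynomial (Fin 2) ℂ}
    (h : P.IsHomogeneous d) :
    P.coeff (Finsupp.single 1 d) = eval ![0, 1] P := by
  rw [eval_eq]
  rw [Finset.sum_eq_single (Finsupp.single (1 : Fin 2) d)]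
  · rw [Finsupp.support_single_ne_zero _ hd]
    simp
  · intro b hb hbne
    have hb0 : b 0 ≠ 0 := by
      intro hb0
      apply hbne
      have h1 : b.degree = d := by
        rw [Finsupp.degree_eq_weight_one]
        exact h (mem_support_iff.mp hb)
      rw [Finsupp.degree_apply, Finset.sum_subset (Finset.subset_univ b.support)
        (fun x _ hx => Finsupp.notMem_support_iff.mp hx), Fin.sum_univ_two] at h1
      have hb1 : b 1 = d := by omega
      ext i
      fin_cases i
      · simp [hb0]
      · simp [hb1]
    rw [Finset.prod_eq_zero (i := (0 : Fin 2)) (Finsupp.mem_support_iff.mpr hb0)]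
    · ring
    · simp [zero_pow hb0]
  · intro hns
    simp [notMem_support_iff.mp hns]

/-- Let `F = (F₁,F₂)` be homogeneous of degree `k−1`. If for every
`A ∈ GL(2,ℂ)` the first component of the transformed force
`F_A(q) = A⁻¹ F(Aq)` has `q₂`-degree `< k−1` (its coefficient at `q₂^{k−1}`
vanishes), then `q₁F₂ − q₂F₁ = 0` identically. -/
theorem stmt_9 (k : ℕ) (hk : 2 ≤ k) (F : Fin 2 → MvPolynomial (Fin 2) ℂ)
    (hhom : ∀ i, (F i).IsHomogeneous (k - 1))
    (hdeg : ∀ A : GL (Fin 2) ℂ,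
      MvPolynomial.coeff (Finsupp.single (1 : Fin 2) (k - 1))
        (∑ j : Fin 2,
          MvPolynomial.C (((A⁻¹ : GL (Fin 2) ℂ) : Matrix (Fin 2) (Fin 2) ℂ) 0 j)
            * lsub ((A : Matrix (Fin 2) (Fin 2) ℂ)) (F j)) = 0) :
    X 0 * F 1 - X 1 * F 0 = 0 := by
  have hd : k - 1 ≠ 0 := by omega
  -- key: for any invertible A, ∑ j (A⁻¹ 0 j) * (F j) (col₁ A) = 0
  have key : ∀ (A : Matrix (Fin 2) (Fin 2) ℂ), A.det ≠ 0 →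
      ∑ j : Fin 2, (A⁻¹) 0 j * eval (fun i => A i 1) (F j) = 0 := by
    intro A hA
    have h := hdeg (Matrix.GeneralLinearGroup.mkOfDetNeZero A hA)
    have hcoeA : ((Matrix.GeneralLinearGroup.mkOfDetNeZero A hA : GL (Fin 2) ℂ) :
        Matrix (Fin 2) (Fin 2) ℂ) = A := rfl
    have hcoeInv : (((Matrix.GeneralLinearGroup.mkOfDetNeZero A hA)⁻¹ : GL (Fin 2) ℂ) :
        Matrix (Fin 2) (Fin 2) ℂ) = A⁻¹ := by
      rw [Matrix.coe_units_inv, hcoeA]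
    rw [hcoeA, hcoeInv] at h
    have hsum : (∑ j : Fin 2, MvPolynomial.C ((A⁻¹) 0 j) * lsub A (F j)).IsHomogeneous (k-1) :=
      IsHomogeneous.sum _ _ _ (fun j _ => ((lsub_isHomogeneous A (hhom j)).C_mul _))
    rw [coeff_eq_eval hd hsum] at h
    rw [map_sum] at h
    convert h using 2 with j
    rw [map_mul, eval_C, eval_lsub]
    congr 1
    apply congrArg (fun z => eval z (F j))
    funext i
    simp [Fin.sum_univ_two]
  apply MvPolynomial.funext
  intro v
  rw [map_zero]
  by_cases hv1 : v 1 ≠ 0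
  · have h := key !![1, v 0; 0, v 1] (by simp [Matrix.det_fin_two_of, hv1])
    rw [Matrix.inv_def, Matrix.adjugate_fin_two, Matrix.det_fin_two_of] at h
    simp only [Fin.sum_univ_two, Matrix.smul_apply, Matrix.cons_val', Matrix.cons_val_zero,
      Matrix.cons_val_one, Matrix.head_cons, Matrix.head_fin_const, smul_eq_mul] at h
    have hcol : (fun i : Fin 2 => !![1, v 0; 0, v 1] i 1) = v := by
      funext i; fin_cases i <;> simp
    rw [hcol] at h
    simp only [Matrix.of_apply, Matrix.cons_val', Matrix.cons_val_zero, Matrix.cons_val_one,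
      Matrix.head_cons] at h
    have hinv : Ring.inverse (1 * v 1 - v 0 * 0) = (v 1)⁻¹ := by
      rw [Ring.inverse_eq_inv]; ring_nf
    rw [hinv] at h
    simp only [map_sub, map_mul, eval_X]
    field_simp at h
    linear_combination -h
  · push_neg at hv1
    by_cases hv0 : v 0 ≠ 0
    · have h := key !![0, v 0; 1, v 1] (by simp [Matrix.det_fin_two_of, hv0])
      rw [Matrix.inv_def, Matrix.adjugate_fin_two, Matrix.det_fin_two_of] at h
      simp only [Fin.sum_univ_two, Matrix.smul_apply, Matrix.cons_val', Matrix.cons_val_zero,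
        Matrix.cons_val_one, Matrix.head_cons, Matrix.head_fin_const, smul_eq_mul] at h
      have hcol : (fun i : Fin 2 => !![0, v 0; 1, v 1] i 1) = v := by
        funext i; fin_cases i <;> simp
      rw [hcol] at h
      simp only [Matrix.of_apply, Matrix.cons_val', Matrix.cons_val_zero, Matrix.cons_val_one,
        Matrix.head_cons] at h
      have hinv : Ring.inverse ((0:ℂ) * v 1 - v 0 * 1) = -(v 0)⁻¹ := by
        rw [Ring.inverse_eq_inv]; simp
      rw [hinv] at h
      simp only [map_sub, map_mul, eval_X]
      field_simp at h
      linear_combination h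
    · push_neg at hv0
      simp [hv0, hv1]
end

section
/- For the n-dimensional Jouanolou system ẋᵢ = x_{i+1}^{p+1} (indices mod n), the Kovalevskaya exponents at each of its Darboux points are Λᵢ = (p+1)ε^{n−i} − 1 for i = 1,…,n, where ε is a primitive n-th root of unity; in particular the elementary symmetric polynomials of the nontrivial exponents Λ₁,…,Λ_{n−1} satisfy τ_r(Λ) = (−1)^r Σ_{i=0}^{r} C(n−i−1, r−i)(p+1)^i for 0 ≤ r ≤ n−1. -/
open MvPolynomial Polynomial

lemma aux_prod_full (n : ℕ) (hn : 0 < n) (c ε : ℂ) (hε : IsPrimitiveRoot ε n) :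
    ∏ i ∈ Finset.range n, (Polynomial.X - Polynomial.C (c * ε ^ i - 1))
      = (Polynomial.X + 1) ^ n - Polynomial.C (c ^ n) := by
  have h := congrArg (Polynomial.aeval (Polynomial.X + 1 : ℂ[X]))
    (X_pow_sub_C_eq_prod hε hn (rfl : c ^ n = c ^ n))
  simp only [map_sub, map_pow, map_prod, Polynomial.aeval_X, Polynomial.aeval_C,
    Polynomial.algebraMap_eq] at h
  rw [show Polynomial.C (c ^ n) = (Polynomial.C c) ^ n from map_pow _ _ _, h]
  apply Finset.prod_congr rfl
  intro i _
  rw [mul_comm c, map_sub, map_one]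
  ring

lemma aux_reindex (n : ℕ) (c ε : ℂ) (hn : 0 < n) (hε1 : ε ^ n = 1) :
    ∏ i ∈ Finset.range n, (Polynomial.X - Polynomial.C (c * ε ^ (n - i) - 1))
      = ∏ i ∈ Finset.range n, (Polynomial.X - Polynomial.C (c * ε ^ i - 1)) := by
  obtain ⟨m, rfl⟩ := Nat.exists_eq_succ_of_ne_zero hn.ne'
  have h1 : ∀ i ∈ Finset.range (m + 1),
      (Polynomial.X - Polynomial.C (c * ε ^ (m + 1 - i) - 1))
        = Polynomial.X - Polynomial.C (c * ε ^ ((m - i) + 1) - 1) := by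
    intro i hi
    simp only [Finset.mem_range] at hi
    have : m + 1 - i = (m - i) + 1 := by omega
    rw [this]
  rw [Finset.prod_congr rfl h1]
  have h2 := Finset.prod_range_reflect
    (fun j => Polynomial.X - Polynomial.C (c * ε ^ (j + 1) - 1)) (m + 1)
  simp only [Nat.add_sub_cancel] at h2
  rw [h2, Finset.prod_range_succ, Finset.prod_range_succ', hε1, pow_zero]

lemma aux_part2 (n p : ℕ) (hn : 0 < n) (ε : ℂ) (hε : IsPrimitiveRoot ε n) :
    ∀ r ≤ n - 1,
      ((Multiset.range (n - 1)).map
          (fun i => ((p : ℂ) + 1) * ε ^ (n - (i + 1)) - 1)).esymm r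
        = (-1) ^ r * ∑ i ∈ Finset.range (r + 1),
            ((n - i - 1).choose (r - i) : ℂ) * ((p : ℂ) + 1) ^ i := by
  obtain ⟨m, rfl⟩ : ∃ m, n = m + 1 := ⟨n - 1, by omega⟩
  set c : ℂ := (p : ℂ) + 1 with hc
  simp only [Nat.add_sub_cancel, show ∀ i : ℕ, m + 1 - (i + 1) = m - i from fun i => by omega,
    show ∀ i : ℕ, m + 1 - i - 1 = m - i from fun i => by omega, Nat.sub_zero]
  set s : Multiset ℂ := (Multiset.range m).map (fun i => c * ε ^ (m - i) - 1) with hs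
  have hcard : Multiset.card s = m := by simp [hs]
  set P : ℂ[X] := (s.map fun t => Polynomial.X - Polynomial.C t).prod with hP
  have hPfin : P = ∏ i ∈ Finset.range m,
      (Polynomial.X - Polynomial.C (c * ε ^ (m - i) - 1)) := by
    rw [hP, hs, Multiset.map_map, ← Finset.range_val, ← Finset.prod_eq_multiset_prod]
    rfl
  have hA : P * (Polynomial.X - Polynomial.C (c - 1))
      = (Polynomial.X + 1) ^ (m + 1) - Polynomial.C (c ^ (m + 1)) := by
    have hfull : ∏ i ∈ Finset.range (m + 1),
        (Polynomial.X - Polynomial.C (c * ε ^ (m - i) - 1))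
          = (Polynomial.X + 1) ^ (m + 1) - Polynomial.C (c ^ (m + 1)) := by
      rw [← aux_prod_full (m + 1) hn c ε hε, ← Finset.prod_range_reflect]
      apply Finset.prod_congr rfl
      intro i hi
      simp only [Finset.mem_range] at hi
      rw [show m - (m + 1 - 1 - i) = i by omega]
    rw [← hfull, Finset.prod_range_succ, hPfin, Nat.sub_self, pow_zero, mul_one]
  have hB : (∑ k ∈ Finset.range (m + 1), Polynomial.C (c ^ (m - k)) * (Polynomial.X + 1) ^ k)
      * (Polynomial.X - Polynomial.C (c - 1))
      = (Polynomial.X + 1) ^ (m + 1) - Polynomial.C (c ^ (m + 1)) := by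
    have h := geom_sum₂_mul (Polynomial.X + 1 : ℂ[X]) (Polynomial.C c) (m + 1)
    simp only [Nat.add_sub_cancel] at h
    calc (∑ k ∈ Finset.range (m + 1), Polynomial.C (c ^ (m - k)) * (Polynomial.X + 1) ^ k)
          * (Polynomial.X - Polynomial.C (c - 1))
        = (∑ k ∈ Finset.range (m + 1), (Polynomial.X + 1) ^ k * (Polynomial.C c) ^ (m - k))
          * ((Polynomial.X + 1) - Polynomial.C c) := by
          rw [map_sub, map_one]
          congr 1
          · apply Finset.sum_congr rfl; intro k _; rw [map_pow]; ring
          · ring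
      _ = (Polynomial.X + 1) ^ (m + 1) - (Polynomial.C c) ^ (m + 1) := h
      _ = (Polynomial.X + 1) ^ (m + 1) - Polynomial.C (c ^ (m + 1)) := by rw [map_pow]
  have hPQ : P = ∑ k ∈ Finset.range (m + 1), Polynomial.C (c ^ (m - k)) * (Polynomial.X + 1) ^ k :=
    mul_right_cancel₀ (Polynomial.X_sub_C_ne_zero (c - 1)) (hA.trans hB.symm)
  intro r hr
  have hes : P.coeff (m - r) = (-1) ^ r * s.esymm r := by
    have h := Multiset.prod_X_sub_C_coeff s (show m - r ≤ Multiset.card s by omega)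
    rw [hcard] at h
    rw [hP, h, show m - (m - r) = r by omega]
  have hcoeff : P.coeff (m - r)
      = ∑ k ∈ Finset.range (m + 1), c ^ (m - k) * (k.choose (m - r) : ℂ) := by
    rw [hPQ, Polynomial.finset_sum_coeff]
    apply Finset.sum_congr rfl
    intro k _
    rw [Polynomial.coeff_C_mul, Polynomial.coeff_X_add_one_pow]
  have hsum : ∑ k ∈ Finset.range (m + 1), c ^ (m - k) * (k.choose (m - r) : ℂ)
      = ∑ i ∈ Finset.range (r + 1), ((m - i).choose (r - i) : ℂ) * c ^ i := by
    rw [← Finset.sum_range_reflect]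
    simp only [Nat.add_sub_cancel]
    rw [← Finset.sum_subset (Finset.range_subset_range.2 (show r + 1 ≤ m + 1 by omega))
      (fun i hi hni => by
        simp only [Finset.mem_range] at hi hni
        rw [Nat.choose_eq_zero_of_lt (show m - i < m - r by omega), Nat.cast_zero, mul_zero])]
    apply Finset.sum_congr rfl
    intro i hi
    simp only [Finset.mem_range] at hi
    rw [show m - (m - i) = i by omega,
      show (m - i).choose (m - r) = (m - i).choose (r - i) by
        rw [show r - i = (m - i) - (m - r) by omega]
        exact (Nat.choose_symm (by omega)).symm]
    ring
  have h2 : s.esymm r = (-1) ^ r * P.coeff (m - r) := by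
    rw [hes, ← mul_assoc, ← pow_add, Even.neg_one_pow ⟨r, rfl⟩, one_mul]
  rw [h2, hcoeff, hsum]

/-- For the `n`-dimensional Jouanolou system `ẋᵢ = x_{i+1}^{p+1}` (indices mod
`n`), at each Darboux point `d` (normalized: `v(d) = d`, `d ≠ 0`) the
Kovalevskaya exponents are `Λᵢ = (p+1)ε^{n−i} − 1`, `i = 1,…,n`, where `ε` is a
primitive `n`-th root of unity (stated via the characteristic polynomial of the
Kovalevskaya matrix `v'(d) − E`); moreover the elementary symmetric polynomials
of the nontrivial exponents `Λ₁,…,Λ_{n−1}` satisfy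
`τ_r(Λ) = (−1)^r Σ_{i=0}^{r} C(n−i−1, r−i)(p+1)^i` for `0 ≤ r ≤ n−1`. -/
theorem stmt_10 (n p : ℕ) [NeZero n] (ε : ℂ) (hε : IsPrimitiveRoot ε n)
    (d : Fin n → ℂ) (hd : d ≠ 0)
    (hdar : ∀ i : Fin n, d (i + 1) ^ (p + 1) = d i) :
    (Matrix.of fun i j : Fin n =>
        MvPolynomial.eval d
            (pderiv j ((X (i + 1) : MvPolynomial (Fin n) ℂ) ^ (p + 1)))
          - if i = j then (1 : ℂ) else 0).charpoly
      = ∏ i ∈ Finset.range n,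
          (Polynomial.X - Polynomial.C (((p : ℂ) + 1) * ε ^ (n - i) - 1)) ∧
    ∀ r ≤ n - 1,
      ((Multiset.range (n - 1)).map
          (fun i => ((p : ℂ) + 1) * ε ^ (n - (i + 1)) - 1)).esymm r
        = (-1) ^ r * ∑ i ∈ Finset.range (r + 1),
            ((n - i - 1).choose (r - i) : ℂ) * ((p : ℂ) + 1) ^ i := by
  refine ⟨?_, aux_part2 n p (Nat.pos_of_ne_zero (NeZero.ne n)) ε hε⟩
  have hn : 0 < n := Nat.pos_of_ne_zero (NeZero.ne n)
  set c : ℂ := (p : ℂ) + 1 with hc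
  set M := (Matrix.of fun i j : Fin n =>
        MvPolynomial.eval d
            (pderiv j ((X (i + 1) : MvPolynomial (Fin n) ℂ) ^ (p + 1)))
          - if i = j then (1 : ℂ) else 0) with hMdef
  -- all coordinates of d are nonzero
  open Fin.NatCast in
  have hdz : ∀ i, d i ≠ 0 := by
    intro i hi
    apply hd
    have key : ∀ k : ℕ, d (i + (k : Fin n)) = 0 := by
      intro k
      induction k with
      | zero => simpa using hi
      | succ k ih =>
        have h := hdar (i + (k : Fin n))
        have : d (i + (k : Fin n) + 1) ^ (p + 1) = 0 := by rw [h]; exact ih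
        have := pow_eq_zero_iff (n := p + 1) (by omega) |>.mp this
        push_cast at this ⊢
        convert this using 2
        rw [add_assoc]
    funext j
    have := key ((j - i : Fin n) : ℕ)
    simpa using this
  -- entries of M
  have hM : ∀ i j, M i j = (if j = i + 1 then c * d (i + 1) ^ p else 0)
      - (if i = j then 1 else 0) := by
    intro i j
    rw [hMdef]
    simp only [Matrix.of_apply]
    congr 1
    rw [pderiv_pow, pderiv_X]
    by_cases h : j = i + 1
    · subst h
      simp [Pi.single_apply, hc, mul_comm]
    · rw [Pi.single_apply, if_neg (fun h' => h h'.symm)]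
      simp [h, Ne.symm h]
  have hc0 : c ≠ 0 := by
    rw [hc, show ((p : ℂ) + 1) = ((p + 1 : ℕ) : ℂ) by push_cast; ring]
    exact_mod_cast Nat.succ_ne_zero p
  -- evaluation of charpoly
  have heval : ∀ μ : ℂ, M.charpoly.eval μ
      = (μ • (1 : Matrix (Fin n) (Fin n) ℂ) - M).det := by
    intro μ
    rw [Matrix.charpoly, ← Polynomial.coe_evalRingHom, RingHom.map_det]
    congr 1
    ext i j
    by_cases h : i = j
    · subst h
      simp [Matrix.charmatrix_apply_eq]
    · simp [Matrix.charmatrix_apply_ne _ _ _ h, h, Matrix.one_apply]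
  -- each c * ζ - 1 with ζ^n = 1 is a root of the charpoly
  have hroot : ∀ ζ : ℂ, ζ ^ n = 1 → M.charpoly.IsRoot (c * ζ - 1) := by
    intro ζ hζ
    set w : Fin n → ℂ := fun i => ζ ^ (i : ℕ) * d i with hw
    have hw0 : w ≠ 0 := by
      intro h
      have := congrFun h ⟨0, hn⟩
      simp only [hw, Pi.zero_apply] at this
      rcases mul_eq_zero.mp this with h' | h'
      · exact pow_ne_zero _ (fun hz => by
          rw [hz, zero_pow hn.ne'] at hζ; exact one_ne_zero hζ.symm) h'
      · exact hdz _ h'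
    have hpow : ∀ a : ℕ, ζ ^ (a % n) = ζ ^ a := by
      intro a
      conv_rhs => rw [← Nat.div_add_mod a n, pow_add, pow_mul, hζ, one_pow, one_mul]
    have hval : ∀ i : Fin n, ζ ^ ((i + 1 : Fin n) : ℕ) = ζ ^ ((i : ℕ) + 1) := by
      intro i
      rw [← hpow ((i : ℕ) + 1), Fin.add_def, Fin.val_one']
      congr 1
      conv_rhs => rw [Nat.add_mod, Nat.mod_eq_of_lt i.isLt]
    have hmv : ((c * ζ - 1) • (1 : Matrix (Fin n) (Fin n) ℂ) - M).mulVec w = 0 := by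
      funext i
      rw [Matrix.sub_mulVec, Matrix.smul_mulVec, Matrix.one_mulVec]
      have hMv : M.mulVec w i = c * d (i + 1) ^ p * w (i + 1) - w i := by
        simp only [Matrix.mulVec, dotProduct, hM, sub_mul, ite_mul, one_mul, zero_mul,
          Finset.sum_sub_distrib, Finset.sum_ite_eq' Finset.univ, Finset.sum_ite_eq Finset.univ,
          Finset.mem_univ, if_true]
      simp only [Pi.sub_apply, Pi.smul_apply, smul_eq_mul, Pi.zero_apply, hMv]
      simp only [hw, hval i]
      have key : d (i + 1) ^ p * d (i + 1) = d i := by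
        rw [← pow_succ]; exact hdar i
      linear_combination (-(c * ζ ^ ((i : ℕ) + 1))) * key
    have hdet : ((c * ζ - 1) • (1 : Matrix (Fin n) (Fin n) ℂ) - M).det = 0 :=
      Matrix.exists_mulVec_eq_zero_iff.mp ⟨w, hw0, hmv⟩
    rw [Polynomial.IsRoot, heval]
    exact hdet
  -- identify the charpoly with the product over the roots of unity
  have hmonic := M.charpoly_monic
  have hdeg : M.charpoly.natDegree = n := by
    rw [Matrix.charpoly_natDegree_eq_dim, Fintype.card_fin]
  have hcardroots : Multiset.card M.charpoly.roots = n := by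
    have h := Polynomial.splits_iff_card_roots.mp
      (IsAlgClosed.splits (M.charpoly))
    rw [hdeg] at h
    exact h
  set μs : Multiset ℂ := (Multiset.range n).map (fun k => c * ε ^ k - 1) with hμs
  have hnodup : μs.Nodup := by
    rw [hμs]
    refine Multiset.Nodup.map_on ?_ (Multiset.nodup_range n)
    intro x hx y hy hxy
    simp only [Multiset.mem_range] at hx hy
    have h2 : c * ε ^ x = c * ε ^ y := by
      have := congrArg (fun z => z + 1) hxy
      simpa using this
    exact hε.pow_inj hx hy (mul_left_cancel₀ hc0 h2)
  have hle : μs ≤ M.charpoly.roots := by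
    rw [Multiset.le_iff_subset hnodup]
    intro x hx
    rw [hμs] at hx
    obtain ⟨k, hk, rfl⟩ := Multiset.mem_map.mp hx
    rw [Polynomial.mem_roots hmonic.ne_zero]
    exact hroot (ε ^ k) (by rw [← pow_mul, mul_comm, pow_mul, hε.pow_eq_one, one_pow])
  have heq : μs = M.charpoly.roots :=
    Multiset.eq_of_le_of_card_le hle (by rw [hcardroots]; simp [hμs])
  have hprod := Polynomial.prod_multiset_X_sub_C_of_monic_of_roots_card_eq hmonic
    (by rw [hcardroots, hdeg])
  rw [← hprod, ← heq, hμs, Multiset.map_map]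
  rw [show ∏ i ∈ Finset.range n,
      (Polynomial.X - Polynomial.C (((p : ℂ) + 1) * ε ^ (n - i) - 1))
    = ∏ i ∈ Finset.range n,
      (Polynomial.X - Polynomial.C (c * ε ^ i - 1)) from
    aux_reindex n c ε hn hε.pow_eq_one]
  rw [← Finset.range_val, ← Finset.prod_eq_multiset_prod]
  rfl

-- #print axioms check
end

section
/- For the force F₁ = q₁(f₀q₁ + f₁q₂)^{k−2}, F₂ = q₂(f₀q₁ + f₁q₂)^{k−2}, the function I = k(f₀p₁ + f₁p₂)² + 2(f₀q₁ + f₁q₂)^k is a first integral of the Newton equations q̇ᵢ = pᵢ, ṗᵢ = −Fᵢ (i = 1,2), for all f₀, f₁ ∈ ℂ and integer k ≥ 2. -/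
/-- For the force `F₁ = q₁(f₀q₁ + f₁q₂)^{k−2}`, `F₂ = q₂(f₀q₁ + f₁q₂)^{k−2}`,
the function `I = k(f₀p₁ + f₁p₂)² + 2(f₀q₁ + f₁q₂)^k` is a first integral of
the Newton equations `q̇ᵢ = pᵢ`, `ṗᵢ = −Fᵢ`, for all `f₀, f₁ ∈ ℂ`, `k ≥ 2`. -/
theorem stmt_16 (k : ℕ) (hk : 2 ≤ k) (f₀ f₁ : ℂ)
    (q₁ p₁ q₂ p₂ : ℂ → ℂ)
    (h1 : ∀ t, HasDerivAt q₁ (p₁ t) t)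
    (h3 : ∀ t, HasDerivAt q₂ (p₂ t) t)
    (h2 : ∀ t, HasDerivAt p₁ (-(q₁ t * (f₀ * q₁ t + f₁ * q₂ t) ^ (k - 2))) t)
    (h4 : ∀ t, HasDerivAt p₂ (-(q₂ t * (f₀ * q₁ t + f₁ * q₂ t) ^ (k - 2))) t) :
    ∀ t, HasDerivAt
      (fun s => (k : ℂ) * (f₀ * p₁ s + f₁ * p₂ s) ^ 2
        + 2 * (f₀ * q₁ s + f₁ * q₂ s) ^ k) 0 t := by
  intro t
  have hP : HasDerivAt (fun s => f₀ * p₁ s + f₁ * p₂ s)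
      (f₀ * -(q₁ t * (f₀ * q₁ t + f₁ * q₂ t) ^ (k - 2))
        + f₁ * -(q₂ t * (f₀ * q₁ t + f₁ * q₂ t) ^ (k - 2))) t :=
    ((h2 t).const_mul f₀).add ((h4 t).const_mul f₁)
  have hQ : HasDerivAt (fun s => f₀ * q₁ s + f₁ * q₂ s)
      (f₀ * p₁ t + f₁ * p₂ t) t :=
    ((h1 t).const_mul f₀).add ((h3 t).const_mul f₁)
  have h := (((hP.pow 2).const_mul (k : ℂ)).add ((hQ.pow k).const_mul 2))
  refine h.congr_deriv ?_
  obtain ⟨m, rfl⟩ : ∃ m, k = m + 2 := ⟨k - 2, by omega⟩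
  simp only [Nat.add_sub_cancel]
  push_cast
  ring
end

section
/- The Newton system q̈₁ = −q₁(a q₁² + q₂²), q̈₂ = −q₂(a q₁² + q₂²) possesses the two functionally independent first integrals I₁ = q₁p₂ − q₂p₁ and I₂ = ½(a p₁² + p₂²) + ¼(a q₁² + q₂²)², for any a ∈ ℂ, where pᵢ = q̇ᵢ. -/
/-- The Newton system `q̈₁ = −q₁(aq₁² + q₂²)`, `q̈₂ = −q₂(aq₁² + q₂²)`
possesses the two functionally independent first integrals
`I₁ = q₁p₂ − q₂p₁` and `I₂ = ½(ap₁² + p₂²) + ¼(aq₁² + q₂²)²` for any `a ∈ ℂ`: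
both are constant along every solution, and their gradients (with respect to
`(q₁,p₁,q₂,p₂)`) are linearly independent at some point of the phase space. -/
theorem stmt_19 (a : ℂ) :
    (∀ q₁ p₁ q₂ p₂ : ℂ → ℂ,
      (∀ t, HasDerivAt q₁ (p₁ t) t) →
      (∀ t, HasDerivAt q₂ (p₂ t) t) →
      (∀ t, HasDerivAt p₁ (-(q₁ t * (a * q₁ t ^ 2 + q₂ t ^ 2))) t) →
      (∀ t, HasDerivAt p₂ (-(q₂ t * (a * q₁ t ^ 2 + q₂ t ^ 2))) t) →
      ∀ t, HasDerivAt (fun s => q₁ s * p₂ s - q₂ s * p₁ s) 0 t ∧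
        HasDerivAt (fun s =>
          (a * p₁ s ^ 2 + p₂ s ^ 2) / 2 + (a * q₁ s ^ 2 + q₂ s ^ 2) ^ 2 / 4) 0 t) ∧
    ∃ q₁ p₁ q₂ p₂ : ℂ,
      LinearIndependent ℂ
        ![![p₂, -q₂, -p₁, q₁],
          ![a * q₁ * (a * q₁ ^ 2 + q₂ ^ 2), a * p₁,
            q₂ * (a * q₁ ^ 2 + q₂ ^ 2), p₂]] := by
  constructor
  · intro q₁ p₁ q₂ p₂ hq₁ hq₂ hp₁ hp₂ t
    constructor
    · have h : HasDerivAt (fun s => q₁ s * p₂ s - q₂ s * p₁ s) _ t :=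
        ((hq₁ t).mul (hp₂ t)).sub ((hq₂ t).mul (hp₁ t))
      convert h using 1
      ring
    · have h : HasDerivAt (fun s =>
          (a * p₁ s ^ 2 + p₂ s ^ 2) / 2 + (a * q₁ s ^ 2 + q₂ s ^ 2) ^ 2 / 4) _ t :=
        ((((hp₁ t).pow 2).const_mul a).add ((hp₂ t).pow 2)).div_const 2
        |>.add (((((hq₁ t).pow 2).const_mul a).add ((hq₂ t).pow 2)).pow 2 |>.div_const 4)
      simp only [Pi.add_apply, Pi.pow_apply] at h
      convert h using 1
      ring
  · refine ⟨0, 0, 0, 1, ?_⟩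
    have : ![![(1:ℂ), -0, -0, 0],
          ![a * 0 * (a * 0 ^ 2 + 0 ^ 2), a * 0, 0 * (a * 0 ^ 2 + 0 ^ 2), 1]]
        = ![![(1:ℂ),0,0,0], ![0,0,0,1]] := by
      funext i j; fin_cases i <;> fin_cases j <;> simp
    rw [this]
    apply Fintype.linearIndependent_iff.2
    intro g hg
    have h0 := congrFun hg 0
    have h3 := congrFun hg 3
    simp [Fin.sum_univ_two] at h0 h3
    intro i; fin_cases i <;> simpa
end
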